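/- Let n ≥ 2, a > 0, and α = (α_1,…,α_n) ∈ (0,∞)^n with a α_k < 1 for all k; set β_k := (1 − a α_k)/α_k. Let μ ∈ ℝ^n and let Σ ∈ ℝ^{n×n} be a symmetric positive semidefinite matrix. Let ρ be the Borel measure on [0,∞)^n \ {0} given by ρ = ρ_0 + Σ_{k=1}^n ρ_k, where ρ_0 is the pushforward of the measure a s^{−1} e^{−s} ds on (0,∞) under the map s ↦ s·α, and ρ_k is the pushforward of the measure β_k s^{−1} e^{−s/α_k} ds on (0,∞) under the map s ↦ s·e_k (e_k the k-th standard basis vector). Then for every θ ∈ ℝ^n, ∫ (exp(i⟨θ, t⋄μ⟩ − ½‖θ‖²_{t⋄Σ}) − 1) ρ(dt) = −a Log(1 − i⟨α⋄μ, θ⟩ + ½‖θ‖²_{α⋄Σ}) − Σ_{k=1}^n β_k Log(1 − i α_k μ_k θ_k + ½ α_k θ_k² Σ_{kk}). -/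

import Mathlib

/-!
The maps `t ↦ t ⋄ μ` and `t ↦ t ⋄ Σ` are positively homogeneous, so on the ray `s ↦ s • v`
(`v = α` or `v = eₖ`) carrying a piece of `ρ` the integrand equals `exp (-z s) - 1` with
`z = ½‖θ‖²_{v⋄Σ} - i⟨v⋄μ, θ⟩`. Each of the `n + 1` pieces therefore reduces to the Frullani-type
integral `∫₀^∞ s⁻¹ e^{-bs} (e^{-zs} - 1) ds = -Log (1 + z / b)` for `Re z ≥ 0`, which follows from
`s⁻¹ e^{-bs} (e^{-zs} - 1) = -∫₀¹ z e^{-(b + uz)s} du` by exchanging the order of integration.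
Finally `Re z ≥ 0` because `α ⋄ Σ` is the Hadamard product of `Σ` with the Gram matrix
`min (αₖ, αₗ) = ⟨1_(0,αₖ], 1_(0,αₗ]⟩` in `L²(ℝ)`, hence positive semidefinite by the Schur
product theorem.
-/

open MeasureTheory Complex

noncomputable section

/-- Euclidean inner product on `ℝ^n`. -/
def dot {n : ℕ} (x y : Fin n → ℝ) : ℝ := ∑ k, x k * y k

/-- Quadratic form `‖θ‖²_A = θ A θᵀ`. -/
def quad {n : ℕ} (A : Matrix (Fin n) (Fin n) ℝ) (θ : Fin n → ℝ) : ℝ :=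
  ∑ k, ∑ l, θ k * A k l * θ l

/-- Outer product `t ⋄ μ` of vectors, `(t ⋄ μ)_k = t_k μ_k`. -/
def diaV {n : ℕ} (t μ : Fin n → ℝ) : Fin n → ℝ := fun k => t k * μ k

/-- Outer product `t ⋄ Σ`, `(t ⋄ Σ)_{kl} = Σ_{kl} min(t_k, t_l)`. -/
def diaM {n : ℕ} (t : Fin n → ℝ) (A : Matrix (Fin n) (Fin n) ℝ) :
    Matrix (Fin n) (Fin n) ℝ := Matrix.of fun k l => A k l * min (t k) (t l)

/-- Lévy exponent of the weak variance-alpha-gamma process `WVAG^n(a, α, μ, Σ)`: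
`Ψ(θ) = -a Log(1 - i⟨α⋄μ,θ⟩ + ½‖θ‖²_{α⋄Σ}) - ∑ₖ βₖ Log(1 - i αₖ μₖ θₖ + ½ αₖ θₖ² Σₖₖ)`,
where `βₖ = (1 - a αₖ)/αₖ`. -/
def Ψwvag {n : ℕ} (a : ℝ) (α μ : Fin n → ℝ) (S : Matrix (Fin n) (Fin n) ℝ)
    (θ : Fin n → ℝ) : ℂ :=
  -(a : ℂ) * Complex.log (1 - Complex.I * (dot (diaV α μ) θ : ℂ) +
      (quad (diaM α S) θ : ℂ) / 2) -
    ∑ k, (((1 - a * α k) / α k : ℝ) : ℂ) *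
      Complex.log (1 - Complex.I * ((α k * μ k * θ k : ℝ) : ℂ) +
        ((α k * θ k ^ 2 * S k k : ℝ) : ℂ) / 2)

/-- The Lévy measure `a s⁻¹ e^{-bs} ds` on `(0,∞)` of the gamma subordinator `Γ_S(a,b)`. -/
def gammaLevyMeasure (a b : ℝ) : Measure ℝ :=
  (volume.restrict (Set.Ioi (0 : ℝ))).withDensity
    (fun s => ENNReal.ofReal (a * s⁻¹ * Real.exp (-(b * s))))

/-- The Lévy measure of the alpha-gamma subordinator `AG_S^n(a, α)`:
`ρ = ρ₀ + ∑ₖ ρₖ`, where `ρ₀` is the pushforward of `a s⁻¹ e^{-s} ds` under `s ↦ s • α`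
and `ρₖ` is the pushforward of `βₖ s⁻¹ e^{-s/αₖ} ds` under `s ↦ s eₖ`. -/
def agLevyMeasure {n : ℕ} (a : ℝ) (α : Fin n → ℝ) : Measure (Fin n → ℝ) :=
  Measure.map (fun s : ℝ => s • α) (gammaLevyMeasure a 1) +
    ∑ k : Fin n, Measure.map (fun s : ℝ => Pi.single k s)
      (gammaLevyMeasure ((1 - a * α k) / α k) (1 / α k))

section Frullani

def frullaniKernel (b : ℝ) (z : ℂ) (s u : ℝ) : ℂ := -z * cexp (-((b + u * z) * s))

variable {b : ℝ} {z : ℂ}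

theorem re_add_mul_pos (hb : 0 < b) (hz : 0 ≤ z.re) {u : ℝ} (hu : 0 ≤ u) :
    0 < ((b : ℂ) + u * z).re := by
  simpa using add_pos_of_pos_of_nonneg hb (mul_nonneg hu hz)

theorem intervalIntegral_frullaniKernel {s : ℝ} (hs : s ≠ 0) :
    ∫ u in (0 : ℝ)..1, frullaniKernel b z s u =
      (s⁻¹ * Real.exp (-(b * s))) • (cexp (-(z * s)) - 1) := by
  unfold frullaniKernel
  have hderiv (u : ℝ) :
      HasDerivAt (fun u : ℝ => (s⁻¹ * Real.exp (-(b * s))) • cexp (-(u * z * s)))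
        (-z * cexp (-((b + u * z) * s))) u := by
    have hlin : HasDerivAt (fun u : ℝ => -(u * z * s)) (-(z * s)) u := by
      simpa [mul_assoc] using ((hasDerivAt_id u).ofReal_comp.mul_const (z * s)).fun_neg
    refine (hlin.cexp.const_smul (s⁻¹ * Real.exp (-(b * s)))).congr_deriv ?_
    rw [Complex.real_smul, show -((b + u * z) * s) = -(b * s) + -(u * z * s) by ring,
      Complex.exp_add]
    have hs' : (s : ℂ) ≠ 0 := by exact_mod_cast hs
    push_cast
    field_simp
  rw [intervalIntegral.integral_eq_sub_of_hasDerivAt (fun u _ => hderiv u)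
    (by apply Continuous.intervalIntegrable; fun_prop)]
  simp [smul_sub]

theorem integral_Ioi_frullaniKernel (hb : 0 < b) (hz : 0 ≤ z.re) {u : ℝ} (hu : 0 ≤ u) :
    ∫ s in Set.Ioi (0 : ℝ), frullaniKernel b z s u = -(z / (b + u * z)) := by
  unfold frullaniKernel
  have hne : (b : ℂ) + u * z ≠ 0 := fun h => by simpa [h] using re_add_mul_pos hb hz hu
  have h := integral_exp_mul_complex_Ioi (a := -(b + u * z))
    (neg_lt_zero.mpr (re_add_mul_pos hb hz hu)) 0
  simp_rw [← neg_mul ((b : ℂ) + _)]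
  rw [integral_const_mul, h]
  field_simp
  simp

theorem integrable_frullaniKernel (hb : 0 < b) (hz : 0 ≤ z.re) :
    Integrable (Function.uncurry (frullaniKernel b z))
      ((volume.restrict (Set.Ioi 0)).prod (volume.restrict (Set.Ioc 0 1))) := by
  have hdom : Integrable (fun p : ℝ × ℝ => ‖z‖ * Real.exp (-b * p.1) * 1)
      ((volume.restrict (Set.Ioi 0)).prod (volume.restrict (Set.Ioc 0 1))) :=
    ((exp_neg_integrableOn_Ioi 0 hb).const_mul ‖z‖).mul_prod (integrable_const 1)
  refine hdom.mono' (by unfold frullaniKernel; fun_prop) ?_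
  rw [Measure.prod_restrict]
  filter_upwards [ae_restrict_mem (measurableSet_Ioi.prod measurableSet_Ioc)]
    with ⟨s, u⟩ ⟨hs, hu, _⟩
  have hre : (-((b + u * z) * s)).re ≤ -b * s := by
    simp only [neg_re, mul_re, add_re, ofReal_re, ofReal_im, add_im, mul_im]
    nlinarith [mul_nonneg (mul_nonneg (le_of_lt hu) hz) (le_of_lt (Set.mem_Ioi.mp hs))]
  simpa [frullaniKernel, norm_exp] using
    mul_le_mul_of_nonneg_left (Real.exp_le_exp.mpr hre) (norm_nonneg z)

theorem intervalIntegral_div_add_mul (hb : 0 < b) (hz : 0 ≤ z.re) :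
    ∫ u in (0 : ℝ)..1, z / (b + u * z) = log (1 + z / b) := by
  have hb' : (b : ℂ) ≠ 0 := by exact_mod_cast hb.ne'
  have hderiv (u : ℝ) (hmem : u ∈ Set.uIcc 0 1) :
      HasDerivAt (fun u : ℝ => log (1 + u * (z / b))) (z / (b + u * z)) u := by
    have hu : 0 ≤ u := by rw [Set.uIcc_of_le zero_le_one] at hmem; exact hmem.1
    have hslit : 1 + u * (z / b) ∈ slitPlane := by
      left
      simp only [add_re, one_re, re_ofReal_mul, div_ofReal_re]
      positivity
    refine (((hasDerivAt_id u).ofReal_comp.mul_const (z / b)).const_add 1).clog_real hslit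
      |>.congr_deriv ?_
    field_simp
    simp
  rw [intervalIntegral.integral_eq_sub_of_hasDerivAt hderiv]
  · simp
  refine ContinuousOn.intervalIntegrable (continuousOn_const.div (by fun_prop) fun u hmem => ?_)
  have hu : 0 ≤ u := by rw [Set.uIcc_of_le zero_le_one] at hmem; exact hmem.1
  exact fun h => by simpa [h] using re_add_mul_pos hb hz hu

theorem smul_cexp_sub_one_eq_integral_frullaniKernel {s : ℝ} (hs : s ≠ 0) :
    (s⁻¹ * Real.exp (-(b * s))) • (cexp (-(z * s)) - 1) =
      ∫ u in Set.Ioc (0 : ℝ) 1, frullaniKernel b z s u := by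
  rw [← intervalIntegral.integral_of_le zero_le_one,
    intervalIntegral_frullaniKernel hs]

theorem integrableOn_frullani (hb : 0 < b) (hz : 0 ≤ z.re) :
    IntegrableOn (fun s : ℝ => (s⁻¹ * Real.exp (-(b * s))) • (cexp (-(z * s)) - 1))
      (Set.Ioi 0) :=
  (integrable_frullaniKernel hb hz).integral_prod_left.congr
    ((ae_restrict_mem measurableSet_Ioi).mono fun _ (hs : 0 < _) =>
      (smul_cexp_sub_one_eq_integral_frullaniKernel hs.ne').symm)

theorem integral_frullani (hb : 0 < b) (hz : 0 ≤ z.re) :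
    ∫ s in Set.Ioi (0 : ℝ), (s⁻¹ * Real.exp (-(b * s))) • (cexp (-(z * s)) - 1) =
      -log (1 + z / b) := calc
  _ = ∫ s in Set.Ioi (0 : ℝ), ∫ u in Set.Ioc (0 : ℝ) 1, frullaniKernel b z s u :=
    setIntegral_congr_fun measurableSet_Ioi fun _ (hs : 0 < _) =>
      smul_cexp_sub_one_eq_integral_frullaniKernel hs.ne'
  _ = ∫ u in Set.Ioc (0 : ℝ) 1, ∫ s in Set.Ioi (0 : ℝ), frullaniKernel b z s u :=
    integral_integral_swap (integrable_frullaniKernel hb hz)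
  _ = ∫ u in Set.Ioc (0 : ℝ) 1, -(z / (b + u * z)) :=
    setIntegral_congr_fun measurableSet_Ioc fun _ hu =>
      integral_Ioi_frullaniKernel hb hz hu.1.le
  _ = -log (1 + z / b) := by
    rw [integral_neg, ← intervalIntegral.integral_of_le zero_le_one,
      intervalIntegral_div_add_mul hb hz]

end Frullani

section GammaLevyMeasure

variable {a b : ℝ} {z : ℂ}

theorem ae_pos_gammaLevyMeasure : ∀ᵐ s ∂gammaLevyMeasure a b, 0 < s :=
  (withDensity_absolutelyContinuous _ _).ae_le (ae_restrict_mem measurableSet_Ioi)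

theorem integrable_gammaLevyMeasure (ha : 0 ≤ a) (hb : 0 < b) (hz : 0 ≤ z.re) :
    Integrable (fun s : ℝ => cexp (-(z * s)) - 1) (gammaLevyMeasure a b) := by
  rw [gammaLevyMeasure, integrable_withDensity_iff_integrable_smul' (by fun_prop)
    (ae_of_all _ fun _ => ENNReal.ofReal_lt_top)]
  refine ((integrableOn_frullani hb hz).smul a).congr ?_
  filter_upwards [ae_restrict_mem measurableSet_Ioi] with s hs
  have hs : 0 < s := hs
  rw [Pi.smul_apply, smul_smul, ENNReal.toReal_ofReal (by positivity), mul_assoc]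

theorem integral_gammaLevyMeasure (ha : 0 ≤ a) (hb : 0 < b) (hz : 0 ≤ z.re) :
    ∫ s, cexp (-(z * s)) - 1 ∂gammaLevyMeasure a b = -a * log (1 + z / b) := by
  rw [gammaLevyMeasure, integral_withDensity_eq_integral_toReal_smul (by fun_prop)
    (ae_of_all _ fun _ => ENNReal.ofReal_lt_top)]
  calc _ = ∫ s in Set.Ioi (0 : ℝ),
        a • ((s⁻¹ * Real.exp (-(b * s))) • (cexp (-(z * s)) - 1)) := by
        refine setIntegral_congr_fun measurableSet_Ioi fun s (hs : 0 < s) => ?_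
        rw [smul_smul, ENNReal.toReal_ofReal (by positivity), mul_assoc]
    _ = -a * log (1 + z / b) := by
        rw [integral_smul, integral_frullani hb hz, real_smul, mul_neg, neg_mul]

theorem integral_map_gammaLevyMeasure {X : Type*} [MeasurableSpace X] {g : ℝ → X}
    (hg : Measurable g) {f : X → ℂ} (hf : AEStronglyMeasurable f ((gammaLevyMeasure a b).map g))
    (hfg : ∀ s, 0 < s → f (g s) = cexp (-(z * s)) - 1)
    (ha : 0 ≤ a) (hb : 0 < b) (hz : 0 ≤ z.re) :
    Integrable f ((gammaLevyMeasure a b).map g) ∧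
      ∫ t, f t ∂(gammaLevyMeasure a b).map g = -a * log (1 + z / b) := by
  have hae : f ∘ g =ᵐ[gammaLevyMeasure a b] fun s => cexp (-(z * s)) - 1 :=
    ae_pos_gammaLevyMeasure.mono hfg
  refine ⟨?_, ?_⟩
  · rw [integrable_map_measure hf hg.aemeasurable]
    exact (integrable_gammaLevyMeasure ha hb hz).congr hae.symm
  · rw [integral_map hg.aemeasurable hf, ← integral_gammaLevyMeasure ha hb hz]
    exact integral_congr_ae hae

end GammaLevyMeasure

section DiamondProducts

variable {n : ℕ}

theorem posSemidef_min {ι : Type*} [Finite ι] {α : ι → ℝ} (hα : ∀ k, 0 ≤ α k) :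
    (Matrix.of fun k l => min (α k) (α l)).PosSemidef := by
  have hgram : (Matrix.of fun k l => min (α k) (α l)) = Matrix.gram ℝ (fun k =>
      (indicatorConstLp 2 (measurableSet_Ioc (a := (0 : ℝ)) (b := α k)) (by simp) (1 : ℝ) :
        Lp ℝ 2 (volume : Measure ℝ))) := by
    ext k l
    simp [Matrix.gram_apply, L2.real_inner_indicatorConstLp_one_indicatorConstLp_one,
      Set.Ioc_inter_Ioc, hα]
  exact hgram ▸ Matrix.posSemidef_gram ℝ _

theorem posSemidef_diaM {α : Fin n → ℝ} (hα : ∀ k, 0 ≤ α k) {S : Matrix (Fin n) (Fin n) ℝ}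
    (hS : S.PosSemidef) : (diaM α S).PosSemidef :=
  hS.hadamard (posSemidef_min hα)

theorem quad_eq_dotProduct_mulVec (A : Matrix (Fin n) (Fin n) ℝ) (θ : Fin n → ℝ) :
    quad A θ = dotProduct (star θ) (A.mulVec θ) := by
  simp [quad, dotProduct, Matrix.mulVec, Finset.mul_sum, mul_assoc]

theorem Matrix.PosSemidef.quad_nonneg {A : Matrix (Fin n) (Fin n) ℝ} (hA : A.PosSemidef)
    (θ : Fin n → ℝ) : 0 ≤ quad A θ :=
  quad_eq_dotProduct_mulVec A θ ▸ hA.dotProduct_mulVec_nonneg θ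

theorem dot_diaV_smul (s : ℝ) (α μ θ : Fin n → ℝ) :
    dot θ (diaV (s • α) μ) = s * dot (diaV α μ) θ := by
  simp only [dot, diaV, Pi.smul_apply, smul_eq_mul, Finset.mul_sum]
  exact Finset.sum_congr rfl fun k _ => by ring

theorem quad_diaM_smul {s : ℝ} (hs : 0 ≤ s) (α : Fin n → ℝ) (S : Matrix (Fin n) (Fin n) ℝ)
    (θ : Fin n → ℝ) : quad (diaM (s • α) S) θ = s * quad (diaM α S) θ := by
  simp only [quad, diaM, Matrix.of_apply, Pi.smul_apply, smul_eq_mul,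
    ← mul_min_of_nonneg _ _ hs, Finset.mul_sum]
  exact Finset.sum_congr rfl fun k _ => Finset.sum_congr rfl fun l _ => by ring

theorem dot_diaV_single (k : Fin n) (s : ℝ) (μ θ : Fin n → ℝ) :
    dot θ (diaV (Pi.single k s) μ) = s * (μ k * θ k) := by
  simp only [dot, diaV, Pi.single_apply, ite_mul, zero_mul, mul_ite, mul_zero,
    Finset.sum_ite_eq', Finset.mem_univ, ↓reduceIte]
  ring

theorem diaM_single {k : Fin n} {s : ℝ} (hs : 0 ≤ s) (S : Matrix (Fin n) (Fin n) ℝ) :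
    diaM (Pi.single k s) S = Matrix.single k k (s * S k k) := by
  ext l m
  by_cases hl : l = k <;> by_cases hm : m = k <;>
    simp [diaM, Pi.single_apply, @eq_comm _ k, hl, hm, hs, mul_comm]

theorem quad_diaM_single {k : Fin n} {s : ℝ} (hs : 0 ≤ s) (S : Matrix (Fin n) (Fin n) ℝ)
    (θ : Fin n → ℝ) : quad (diaM (Pi.single k s) S) θ = s * (θ k ^ 2 * S k k) := by
  simp only [quad, diaM_single hs, Matrix.single_apply, ite_and, mul_ite, mul_zero, ite_mul,
    zero_mul, Finset.sum_ite_irrel, Finset.sum_ite_eq, Finset.mem_univ, ↓reduceIte,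
    Finset.sum_const_zero]
  ring

end DiamondProducts

section WeakSubordination

variable {n : ℕ} (μ : Fin n → ℝ) (S : Matrix (Fin n) (Fin n) ℝ) (θ : Fin n → ℝ)

def weakSubordIntegrand (t : Fin n → ℝ) : ℂ :=
  cexp (I * dot θ (diaV t μ) - quad (diaM t S) θ / 2) - 1

theorem continuous_weakSubordIntegrand : Continuous (weakSubordIntegrand μ S θ) := by
  unfold weakSubordIntegrand dot diaV quad diaM
  fun_prop

variable {μ S θ}

theorem integral_map_weakSubordIntegrand {g : ℝ → Fin n → ℝ} (hg : Measurable g) {c q : ℝ}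
    (hq : 0 ≤ q) (hdot : ∀ s, 0 < s → dot θ (diaV (g s) μ) = s * c)
    (hquad : ∀ s, 0 < s → quad (diaM (g s) S) θ = s * q) {a b : ℝ} (ha : 0 ≤ a) (hb : 0 < b) :
    Integrable (weakSubordIntegrand μ S θ) ((gammaLevyMeasure a b).map g) ∧
      ∫ t, weakSubordIntegrand μ S θ t ∂(gammaLevyMeasure a b).map g =
        -a * log (1 + ((q : ℂ) / 2 - I * c) / b) := by
  refine integral_map_gammaLevyMeasure hg
    (continuous_weakSubordIntegrand μ S θ).aestronglyMeasurable (fun s hs => ?_) ha hb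
    (by simpa using div_nonneg hq zero_le_two)
  rw [weakSubordIntegrand, hdot s hs, hquad s hs]
  push_cast
  ring_nf

end WeakSubordination

theorem stmt5_general {n : ℕ} (a : ℝ) (ha : 0 < a) (α : Fin n → ℝ)
    (hα : ∀ k, 0 < α k) (hsmall : ∀ k, a * α k < 1) (μ : Fin n → ℝ)
    (S : Matrix (Fin n) (Fin n) ℝ) (hS : S.PosSemidef) (θ : Fin n → ℝ) :
    ∫ t, (Complex.exp (Complex.I * (dot θ (diaV t μ) : ℂ) -
        (quad (diaM t S) θ : ℂ) / 2) - 1) ∂(agLevyMeasure a α) =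
      Ψwvag a α μ S θ := by
  obtain ⟨hint₀, hval₀⟩ := integral_map_weakSubordIntegrand (μ := μ) (g := fun s => s • α)
    (by fun_prop) (((posSemidef_diaM fun k => (hα k).le) hS).quad_nonneg θ)
    (fun s _ => dot_diaV_smul s α μ θ) (fun s hs => quad_diaM_smul hs.le α S θ) ha.le one_pos
  have hcoord (k : Fin n) := integral_map_weakSubordIntegrand (g := fun s => Pi.single k s)
    (continuous_single k).measurable (mul_nonneg (sq_nonneg (θ k)) hS.diag_nonneg)
    (fun s _ => dot_diaV_single k s μ θ) (fun s hs => quad_diaM_single hs.le S θ)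
    (a := (1 - a * α k) / α k) (div_nonneg (by linarith [hsmall k]) (hα k).le)
    (one_div_pos.mpr (hα k))
  have harg₀ : 1 + ((quad (diaM α S) θ : ℂ) / 2 - I * dot (diaV α μ) θ) / ((1 : ℝ) : ℂ) =
      1 - I * dot (diaV α μ) θ + (quad (diaM α S) θ : ℂ) / 2 := by
    push_cast; ring
  have hargₖ (k : Fin n) :
      1 + (((θ k ^ 2 * S k k : ℝ) : ℂ) / 2 - I * (μ k * θ k : ℝ)) / ((1 / α k : ℝ) : ℂ) =
        1 - I * ((α k * μ k * θ k : ℝ) : ℂ) + ((α k * θ k ^ 2 * S k k : ℝ) : ℂ) / 2 := by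
    push_cast; simp only [one_div, div_inv_eq_mul]; ring
  change ∫ t, weakSubordIntegrand μ S θ t ∂(agLevyMeasure a α) = _
  rw [agLevyMeasure, integral_add_measure hint₀ (integrable_finsetSum_measure.2 fun k _ =>
    (hcoord k).1), integral_finsetSum_measure fun k _ => (hcoord k).1, hval₀, harg₀,
    Finset.sum_congr rfl fun k _ => by rw [(hcoord k).2, hargₖ]]
  simp only [Ψwvag, neg_mul, Finset.sum_neg_distrib, sub_eq_add_neg]

/-- The Lévy exponent of the weak subordination of `BM^n(μ,Σ)` with the alpha-gamma
subordinator `AG_S^n(a,α)` equals the Lévy exponent of `WVAG^n(a,α,μ,Σ)`. -/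
theorem stmt5 {n : ℕ} (hn : 2 ≤ n) (a : ℝ) (ha : 0 < a) (α : Fin n → ℝ)
    (hα : ∀ k, 0 < α k) (hsmall : ∀ k, a * α k < 1) (μ : Fin n → ℝ)
    (S : Matrix (Fin n) (Fin n) ℝ) (hS : S.PosSemidef) (θ : Fin n → ℝ) :
    ∫ t, (Complex.exp (Complex.I * (dot θ (diaV t μ) : ℂ) -
        (quad (diaM t S) θ : ℂ) / 2) - 1) ∂(agLevyMeasure a α) =
      Ψwvag a α μ S θ :=
  stmt5_general a ha α hα hsmall μ S hS θ
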